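/- arXiv:1203.2053 — 5 statements merged into one kernel-verified Lean document; each statement's English description precedes it below -/
import Mathlib

section
/- Let V be a finite-dimensional symplectic vector space, and let H be a regular subspace of dimension k−1 contained in a regular subspace B of dimension k+1. Then every k-dimensional subspace U with H ⊆ U ⊆ B is tangential, i.e., dim Rad(U) = 1. -/
/-!
Since `H` is regular, `V = H ⊕ H^⊥`, so by the modular law `U = H ⊕ L` with `L = U ⊓ H^⊥`,
a line. An alternating form vanishes on a line, and `L ⊥ H`, so `L` lies in `Rad U`; conversely
`Rad U ⊆ U ⊓ H^⊥ = L` because `H ≤ U`. Hence `Rad U = L` is one-dimensional.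
-/

open LinearMap (BilinForm)

namespace LinearMap.BilinForm

theorem orthogonal_sup {R M : Type*} [CommSemiring R] [AddCommMonoid M] [Module R M]
    (Φ : BilinForm R M) (N L : Submodule R M) : Φ.orthogonal (N ⊔ L) = Φ.orthogonal N ⊓ Φ.orthogonal L := by
  refine le_antisymm (le_inf (orthogonal_le le_sup_left) (orthogonal_le le_sup_right)) ?_
  rintro m ⟨hN, hL⟩ n hn
  obtain ⟨a, ha, b, hb, rfl⟩ := Submodule.mem_sup.mp hn
  simp [hN a ha, hL b hb]

variable {K V : Type*} [Field K] [AddCommGroup V] [Module K V] [FiniteDimensional K V]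
  {Φ : BilinForm K V} {H U W : Submodule K V}

theorem IsAlt.le_orthogonal_self_of_finrank_eq_one (hΦ : Φ.IsAlt) (hW : Module.finrank K W = 1) :
    W ≤ Φ.orthogonal W := by
  obtain ⟨v, hv⟩ := finrank_le_one_iff.mp hW.le
  intro w hw u hu
  obtain ⟨c, hc⟩ := hv ⟨w, hw⟩
  obtain ⟨d, hd⟩ := hv ⟨u, hu⟩
  have hw' : w = c • (v : V) := by simpa using (congrArg Subtype.val hc).symm
  have hu' : u = d • (v : V) := by simpa using (congrArg Subtype.val hd).symm
  simp [hw', hu', hΦ.self_eq_zero]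

theorem sup_inf_orthogonal_eq_of_le (hΦ : Φ.IsRefl) (hH : H ⊓ Φ.orthogonal H = ⊥) (hHU : H ≤ U) :
    H ⊔ U ⊓ Φ.orthogonal H = U := by
  have hcompl : IsCompl H (Φ.orthogonal H) :=
    (isCompl_orthogonal_iff_disjoint hΦ).mpr (disjoint_iff.mpr hH)
  rw [inf_comm, ← sup_inf_assoc_of_le _ hHU, hcompl.sup_eq_top, top_inf_eq]

theorem finrank_inf_orthogonal_add_finrank (hΦ : Φ.IsRefl) (hH : H ⊓ Φ.orthogonal H = ⊥)
    (hHU : H ≤ U) :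
    Module.finrank K ↥(U ⊓ Φ.orthogonal H) + Module.finrank K H = Module.finrank K U := by
  have hdisj : H ⊓ (U ⊓ Φ.orthogonal H) = ⊥ :=
    le_bot_iff.mp (hH ▸ inf_le_inf_left H inf_le_right)
  have := Submodule.finrank_sup_add_finrank_inf_eq H (U ⊓ Φ.orthogonal H)
  rw [sup_inf_orthogonal_eq_of_le hΦ hH hHU, hdisj, finrank_bot] at this
  omega

theorem inf_orthogonal_self_eq_inf_orthogonal (hΦ : Φ.IsRefl) (hH : H ⊓ Φ.orthogonal H = ⊥)
    (hHU : H ≤ U) (hiso : U ⊓ Φ.orthogonal H ≤ Φ.orthogonal (U ⊓ Φ.orthogonal H)) :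
    U ⊓ Φ.orthogonal U = U ⊓ Φ.orthogonal H := by
  refine le_antisymm (inf_le_inf_left U (orthogonal_le hHU)) (le_inf inf_le_left ?_)
  conv_rhs => rw [← sup_inf_orthogonal_eq_of_le hΦ hH hHU, orthogonal_sup]
  exact le_inf inf_le_right hiso

end LinearMap.BilinForm

open LinearMap.BilinForm in
theorem pencil_between_regulars_is_tangential_general
    {K V : Type*} [Field K] [AddCommGroup V] [Module K V] [FiniteDimensional K V]
    (Φ : LinearMap.BilinForm K V) (halt : Φ.IsAlt)
    (k : ℕ)
    (H : Submodule K V)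
    (hHreg : H ⊓ Φ.orthogonal H = ⊥)
    (hH : Module.finrank K H + 1 = k)
    (U : Submodule K V) (hHU : H ≤ U)
    (hU : Module.finrank K U = k) :
    Module.finrank K ↥(U ⊓ Φ.orthogonal U) = 1 := by
  have hline : Module.finrank K ↥(U ⊓ Φ.orthogonal H) = 1 := by
    have := finrank_inf_orthogonal_add_finrank halt.isRefl hHreg hHU
    omega
  rw [inf_orthogonal_self_eq_inf_orthogonal halt.isRefl hHreg hHU
    (halt.le_orthogonal_self_of_finrank_eq_one hline)]
  exact hline

theorem pencil_between_regulars_is_tangential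
    {K V : Type*} [Field K] [AddCommGroup V] [Module K V] [FiniteDimensional K V]
    (Φ : LinearMap.BilinForm K V) (hnd : Φ.Nondegenerate) (halt : Φ.IsAlt)
    (hchar : (2 : K) ≠ 0) (k : ℕ)
    (H B : Submodule K V) (hHB : H ≤ B)
    (hHreg : H ⊓ Φ.orthogonal H = ⊥) (hBreg : B ⊓ Φ.orthogonal B = ⊥)
    (hH : Module.finrank K H + 1 = k) (hB : Module.finrank K B = k + 1)
    (U : Submodule K V) (hHU : H ≤ U) (hUB : U ≤ B)
    (hU : Module.finrank K U = k) :
    Module.finrank K ↥(U ⊓ Φ.orthogonal U) = 1 :=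
  pencil_between_regulars_is_tangential_general Φ halt k H hHreg hH U hHU hU
end

section
/- Let V be a finite-dimensional symplectic vector space and H ⊂ B tangential subspaces with dim H = k−1, dim B = k+1, and let p = Rad(H), q = Rad(B). If q ⊆ H then p = q, and consequently no k-dimensional subspace U with H ⊂ U ⊂ B is regular. -/
namespace LinearMap.BilinForm

variable {R M : Type*} [CommRing R] [AddCommGroup M] [Module R M] {Φ : LinearMap.BilinForm R M}

theorem inf_orthogonal_le_inf_orthogonal_of_le {H U B : Submodule R M} (hHU : H ≤ U)
    (hUB : U ≤ B) (hradB : B ⊓ Φ.orthogonal B ≤ H) :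
    B ⊓ Φ.orthogonal B ≤ U ⊓ Φ.orthogonal U :=
  le_inf (hradB.trans hHU) (inf_le_right.trans (Φ.orthogonal_le hUB))

end LinearMap.BilinForm

theorem empty_pencil_case_general
    {K V : Type*} [Field K] [AddCommGroup V] [Module K V]
    (Φ : LinearMap.BilinForm K V) (k : ℕ)
    (H B p q : Submodule K V) (hHB : H ≤ B)
    (hp : Module.finrank K p = 1) (hq : Module.finrank K q = 1)
    (hradH : H ⊓ Φ.orthogonal H = p) (hradB : B ⊓ Φ.orthogonal B = q)
    (hqH : q ≤ H) :
    p = q ∧ ∀ U : Submodule K V, H ≤ U → U ≤ B → Module.finrank K U = k →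
      U ⊓ Φ.orthogonal U ≠ ⊥ := by
  subst hradH hradB
  have hqp := Φ.inf_orthogonal_le_inf_orthogonal_of_le le_rfl hHB hqH
  have : FiniteDimensional K ↥(H ⊓ Φ.orthogonal H) := Module.finite_of_finrank_eq_succ hp
  refine ⟨(Submodule.eq_of_le_of_finrank_eq hqp (hq.trans hp.symm)).symm,
    fun U hHU hUB _ hradU => ?_⟩
  have hq_bot := hradU ▸ Φ.inf_orthogonal_le_inf_orthogonal_of_le hHU hUB hqH
  rw [le_bot_iff.mp hq_bot, finrank_bot] at hq
  exact zero_ne_one hq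

theorem empty_pencil_case
    {K V : Type*} [Field K] [AddCommGroup V] [Module K V] [FiniteDimensional K V]
    (Φ : LinearMap.BilinForm K V) (hnd : Φ.Nondegenerate) (halt : Φ.IsAlt)
    (hchar : (2 : K) ≠ 0) (k : ℕ)
    (H B p q : Submodule K V) (hHB : H ≤ B)
    (hH : Module.finrank K H + 1 = k) (hBdim : Module.finrank K B = k + 1)
    (hp : Module.finrank K p = 1) (hq : Module.finrank K q = 1)
    (hradH : H ⊓ Φ.orthogonal H = p) (hradB : B ⊓ Φ.orthogonal B = q)
    (hqH : q ≤ H) :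
    p = q ∧ ∀ U : Submodule K V, H ≤ U → U ≤ B → Module.finrank K U = k →
      U ⊓ Φ.orthogonal U ≠ ⊥ :=
  empty_pencil_case_general Φ k H B p q hHB hp hq hradH hradB hqH
end

section
/- Let V be a finite-dimensional symplectic vector space and H ⊂ B tangential subspaces with dim H = k−1, dim B = k+1, p = Rad(H), q = Rad(B), and suppose q ⊄ H. Set L = p + q and U₀ = H + q. Then L is an isotropic line (L ⊆ L^⊥), L ⊥ H, and Rad(U₀) = L; moreover every k-dimensional subspace U with H ⊂ U ⊂ B other than U₀ is regular. -/
/-!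
Everything in `B` is orthogonal to `q = Rad B`, and `p = Rad H` is orthogonal to `H`; hence
`L = p + q` lies in the radical of `U₀ = H + q`. Conversely `Rad U₀ ∩ H ⊆ Rad H = p`, so
`dim Rad U₀ ≤ dim U₀ - dim H + 1 = 2 = dim L`, giving `Rad U₀ = L`; isotropy of `L` and `L ⊥ H`
follow since `L ⊆ U₀ ⊆ B`. A `k`-dimensional `U` between `H` and `B` other than `U₀` misses the
line `q`, so `U + q = B`; then `Rad U` is orthogonal to `U + q = B`, i.e. `Rad U ⊆ Rad B ∩ U = 0`.
-/

open Module

namespace Submodule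

variable {K V : Type*} [Field K] [AddCommGroup V] [Module K V]

theorem disjoint_of_finrank_eq_one_of_not_le {W q : Submodule K V} (hq : finrank K q = 1)
    (hqW : ¬ q ≤ W) : Disjoint q W :=
  (isAtom_iff_finrank_eq_one.mpr hq).not_le_iff_disjoint.mp hqW

theorem finrank_sup_eq_succ_of_not_le [FiniteDimensional K V] {W q : Submodule K V}
    (hq : finrank K q = 1) (hqW : ¬ q ≤ W) : finrank K ↥(W ⊔ q) = finrank K W + 1 := by
  have := finrank_sup_add_finrank_inf_eq W q
  rw [(disjoint_of_finrank_eq_one_of_not_le hq hqW).symm.eq_bot, finrank_bot] at this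
  omega

end Submodule

namespace LinearMap.BilinForm

variable {K V : Type*} [Field K] [AddCommGroup V] [Module K V] {Φ : LinearMap.BilinForm K V}

theorem orthogonal_sup_s12 (A C : Submodule K V) :
    Φ.orthogonal (A ⊔ C) = Φ.orthogonal A ⊓ Φ.orthogonal C := by
  refine le_antisymm (le_inf (orthogonal_le le_sup_left) (orthogonal_le le_sup_right)) ?_
  rintro x ⟨hxA, hxC⟩ n hn
  obtain ⟨a, ha, c, hc, rfl⟩ := Submodule.mem_sup.mp hn
  simp only [map_add, LinearMap.add_apply, hxA a ha, hxC c hc, add_zero]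

theorem IsRefl.le_orthogonal_comm (hΦ : Φ.IsRefl) {A C : Submodule K V} :
    A ≤ Φ.orthogonal C ↔ C ≤ Φ.orthogonal A :=
  ⟨fun h => (le_orthogonal_orthogonal hΦ).trans (orthogonal_le h),
    fun h => (le_orthogonal_orthogonal hΦ).trans (orthogonal_le h)⟩

/-- The radical of `H ≤ U` meets `H` inside the radical of `H`. -/
theorem finrank_inf_orthogonal_add_finrank_le [FiniteDimensional K V] {H U : Submodule K V}
    (hHU : H ≤ U) :
    finrank K ↥(U ⊓ Φ.orthogonal U) + finrank K H ≤
      finrank K U + finrank K ↥(H ⊓ Φ.orthogonal H) := by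
  have hsup : U ⊓ Φ.orthogonal U ⊔ H ≤ U := sup_le inf_le_left hHU
  have hinf : U ⊓ Φ.orthogonal U ⊓ H ≤ H ⊓ Φ.orthogonal H :=
    le_inf inf_le_right (inf_le_left.trans (inf_le_right.trans (orthogonal_le hHU)))
  have := Submodule.finrank_sup_add_finrank_inf_eq (U ⊓ Φ.orthogonal U) H
  have := Submodule.finrank_mono hsup
  have := Submodule.finrank_mono hinf
  omega

theorem inf_orthogonal_le_of_sup_eq (hΦ : Φ.IsRefl) {U B : Submodule K V}
    (hUB : U ⊔ (B ⊓ Φ.orthogonal B) = B) :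
    U ⊓ Φ.orthogonal U ≤ B ⊓ Φ.orthogonal B := by
  have hU : U ≤ B := le_sup_left.trans hUB.le
  have hrad : U ⊓ Φ.orthogonal U ≤ Φ.orthogonal (B ⊓ Φ.orthogonal B) :=
    hΦ.le_orthogonal_comm.mp (inf_le_right.trans (orthogonal_le (inf_le_left.trans hU)))
  refine le_inf (inf_le_left.trans hU) ?_
  rw [← hUB, orthogonal_sup_s12]
  exact le_inf inf_le_right hrad

end LinearMap.BilinForm

open LinearMap.BilinForm

theorem nonempty_pencil_case_general
    {K V : Type*} [Field K] [AddCommGroup V] [Module K V] [FiniteDimensional K V]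
    (Φ : LinearMap.BilinForm K V) (halt : Φ.IsAlt)
    (k : ℕ)
    (H B p q : Submodule K V) (hHB : H ≤ B)
    (hH : Module.finrank K H + 1 = k) (hBdim : Module.finrank K B = k + 1)
    (hp : Module.finrank K p = 1) (hq : Module.finrank K q = 1)
    (hradH : H ⊓ Φ.orthogonal H = p) (hradB : B ⊓ Φ.orthogonal B = q)
    (hqH : ¬ q ≤ H) :
    (p ⊔ q) ≤ Φ.orthogonal (p ⊔ q) ∧
    (p ⊔ q) ≤ Φ.orthogonal H ∧
    (H ⊔ q) ⊓ Φ.orthogonal (H ⊔ q) = p ⊔ q ∧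
    (∀ U : Submodule K V, H ≤ U → U ≤ B → Module.finrank K U = k →
      U ≠ H ⊔ q → U ⊓ Φ.orthogonal U = ⊥) := by
  have hpH : p ≤ H := hradH ▸ inf_le_left
  have hpHo : p ≤ Φ.orthogonal H := hradH ▸ inf_le_right
  have hqB : q ≤ B := hradB ▸ inf_le_left
  have hqBo : q ≤ Φ.orthogonal B := hradB ▸ inf_le_right
  have hLU₀ : p ⊔ q ≤ H ⊔ q := sup_le_sup_right hpH q
  have hU₀B : H ⊔ q ≤ B := sup_le hHB hqB
  have hqU₀o : q ≤ Φ.orthogonal (H ⊔ q) := hqBo.trans (orthogonal_le hU₀B)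
  have hpqo : p ≤ Φ.orthogonal q := halt.isRefl.le_orthogonal_comm.mp
    (hqU₀o.trans (orthogonal_le (le_sup_left.trans hLU₀)))
  have hradU₀ : (H ⊔ q) ⊓ Φ.orthogonal (H ⊔ q) = p ⊔ q := by
    have hle : p ⊔ q ≤ (H ⊔ q) ⊓ Φ.orthogonal (H ⊔ q) :=
      le_inf hLU₀ (sup_le (by rw [orthogonal_sup_s12]; exact le_inf hpHo hpqo) hqU₀o)
    have hL := Submodule.finrank_sup_eq_succ_of_not_le hq (fun h => hqH (h.trans hpH))
    have hU₀ := Submodule.finrank_sup_eq_succ_of_not_le hq hqH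
    have := finrank_inf_orthogonal_add_finrank_le (Φ := Φ) (le_sup_left : H ≤ H ⊔ q)
    rw [hradH] at this
    exact (Submodule.eq_of_le_of_finrank_le hle (by omega)).symm
  have hLo : p ⊔ q ≤ Φ.orthogonal (H ⊔ q) := hradU₀ ▸ inf_le_right
  refine ⟨hLo.trans (orthogonal_le hLU₀), hLo.trans (orthogonal_le le_sup_left), hradU₀, ?_⟩
  intro U hHU hUB hUdim hU
  have hqU : ¬ q ≤ U := fun h => hU
    (Submodule.eq_of_le_of_finrank_le (sup_le hHU h)
      (by rw [Submodule.finrank_sup_eq_succ_of_not_le hq hqH]; omega)).symm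
  have hUqB : U ⊔ (B ⊓ Φ.orthogonal B) = B := by
    rw [hradB]
    exact Submodule.eq_of_le_of_finrank_le (sup_le hUB hqB)
      (by rw [Submodule.finrank_sup_eq_succ_of_not_le hq hqU]; omega)
  have hradU := inf_orthogonal_le_of_sup_eq halt.isRefl hUqB
  rw [hradB] at hradU
  exact le_bot_iff.mp ((le_inf inf_le_left hradU).trans
    (Submodule.disjoint_of_finrank_eq_one_of_not_le hq hqU).symm.le_bot)

theorem nonempty_pencil_case
    {K V : Type*} [Field K] [AddCommGroup V] [Module K V] [FiniteDimensional K V]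
    (Φ : LinearMap.BilinForm K V) (hnd : Φ.Nondegenerate) (halt : Φ.IsAlt)
    (hchar : (2 : K) ≠ 0) (k : ℕ)
    (H B p q : Submodule K V) (hHB : H ≤ B)
    (hH : Module.finrank K H + 1 = k) (hBdim : Module.finrank K B = k + 1)
    (hp : Module.finrank K p = 1) (hq : Module.finrank K q = 1)
    (hradH : H ⊓ Φ.orthogonal H = p) (hradB : B ⊓ Φ.orthogonal B = q)
    (hqH : ¬ q ≤ H) :
    (p ⊔ q) ≤ Φ.orthogonal (p ⊔ q) ∧
    (p ⊔ q) ≤ Φ.orthogonal H ∧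
    (H ⊔ q) ⊓ Φ.orthogonal (H ⊔ q) = p ⊔ q ∧
    (∀ U : Submodule K V, H ≤ U → U ≤ B → Module.finrank K U = k →
      U ≠ H ⊔ q → U ⊓ Φ.orthogonal U = ⊥) :=
  nonempty_pencil_case_general Φ halt k H B p q hHB hH hBdim hp hq hradH hradB hqH
end

section
/- Let V be a finite-dimensional symplectic vector space. A 3-dimensional subspace π contains three 1-dimensional subspaces a₁, a₂, a₃ spanning π such that all three lines aᵢ + aⱼ (i ≠ j) are regular, if and only if dim Rad(π) = 1. -/
/-!
If `Φ u w ≠ 0` for some `u, w ∈ π`, the line `L = ⟨u, w⟩` is regular, so `L ∩ Rad(π) = 0`, and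
the two equations `Φ u x = Φ w x = 0` have a nonzero solution `x ∈ π`; then `π = L ⊕ ⟨x⟩` and,
as `Φ x x = 0`, `Rad(π) = ⟨x⟩`. Hence `dim Rad(π) = 1` as soon as `π` contains a regular line,
and `Rad(π) = π` otherwise. Conversely, given a regular line `⟨u, w⟩ ⊆ π` and `Rad(π) = ⟨x⟩`,
the points `u`, `w`, `u + w + x` span `π` and pairwise span regular lines, because
`Φ u (u + w + x) = Φ u w` and `Φ w (u + w + x) = Φ w u`.
-/

open Submodule Module

theorem Submodule.exists_mem_ne_zero_apply_eq_zero_of_two_lt_finrank {K V : Type*} [Field K]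
    [AddCommGroup V] [Module K V] {N : Submodule K V} (hN : 2 < finrank K N) (f g : V →ₗ[K] K) :
    ∃ x ∈ N, x ≠ 0 ∧ f x = 0 ∧ g x = 0 := by
  have : FiniteDimensional K N := Module.finite_of_finrank_pos (by omega)
  obtain ⟨y, hy, hy0⟩ := exists_mem_ne_zero_of_ne_bot <|
    LinearMap.ker_ne_bot_of_finrank_lt (f := (f.prod g).domRestrict N) (by simpa using hN)
  exact ⟨y, y.2, by simpa using hy0, by simpa using hy⟩

theorem Submodule.sup_span_singleton_add_eq {R M : Type*} [Ring R] [AddCommGroup M] [Module R M]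
    {N : Submodule R M} {y : M} (hy : y ∈ N) (x : M) : N ⊔ R ∙ (y + x) = N ⊔ R ∙ x := by
  apply le_antisymm <;> refine sup_le le_sup_left ((span_singleton_le_iff_mem _ _).mpr ?_)
  · exact add_mem (mem_sup_left hy) (mem_sup_right (mem_span_singleton_self x))
  · simpa using sub_mem (mem_sup_right (mem_span_singleton_self (y + x))) (mem_sup_left hy)

theorem Submodule.exists_ne_zero_eq_span_singleton_of_finrank_eq_one {K V : Type*} [Field K]
    [AddCommGroup V] [Module K V] {N : Submodule K V} (hN : finrank K N = 1) :
    ∃ v ≠ 0, N = K ∙ v := by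
  have : FiniteDimensional K N := .of_finrank_eq_succ hN
  obtain ⟨v, hv, hv0⟩ := exists_mem_ne_zero_of_ne_bot (one_le_finrank_iff.mp hN.ge)
  exact ⟨v, hv0, eq_span_singleton_of_mem_of_finrank_eq_one hN hv hv0⟩

namespace LinearMap.BilinForm

variable {K V : Type*} [Field K] [AddCommGroup V] [Module K V] {Φ : LinearMap.BilinForm K V}

theorem IsAlt.eq_zero_of_mem_sup_of_apply_eq_zero (hΦ : Φ.IsAlt) {u w x : V}
    (h : Φ u w ≠ 0) (hx : x ∈ K ∙ u ⊔ K ∙ w) (hux : Φ u x = 0) (hwx : Φ w x = 0) :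
    x = 0 := by
  obtain ⟨_, hy, _, hz, rfl⟩ := mem_sup.mp hx
  obtain ⟨a, rfl⟩ := mem_span_singleton.mp hy
  obtain ⟨b, rfl⟩ := mem_span_singleton.mp hz
  have hwu : Φ w u ≠ 0 := mt hΦ.eq_iff.mpr h
  simp only [map_add, map_smul, smul_eq_mul, hΦ.self_eq_zero, mul_zero, zero_add,
    add_zero] at hux hwx
  simp [(mul_eq_zero.mp hux).resolve_right h, (mul_eq_zero.mp hwx).resolve_right hwu]

theorem IsAlt.disjoint_sup_orthogonal (hΦ : Φ.IsAlt) {u w : V} {N : Submodule K V}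
    (hu : u ∈ N) (hw : w ∈ N) (h : Φ u w ≠ 0) :
    Disjoint (K ∙ u ⊔ K ∙ w) (Φ.orthogonal N) :=
  disjoint_def.mpr fun _ hxL hxN ↦
    hΦ.eq_zero_of_mem_sup_of_apply_eq_zero h hxL (hxN u hu) (hxN w hw)

theorem IsAlt.sup_inf_orthogonal_eq_bot (hΦ : Φ.IsAlt) {u w : V} (h : Φ u w ≠ 0) :
    (K ∙ u ⊔ K ∙ w) ⊓ Φ.orthogonal (K ∙ u ⊔ K ∙ w) = ⊥ :=
  (hΦ.disjoint_sup_orthogonal (mem_sup_left (mem_span_singleton_self u))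
    (mem_sup_right (mem_span_singleton_self w)) h).eq_bot

theorem IsAlt.apply_ne_zero_of_sup_inf_orthogonal_eq_bot (hΦ : Φ.IsAlt) {u w : V}
    (hu : u ≠ 0) (hL : (K ∙ u ⊔ K ∙ w) ⊓ Φ.orthogonal (K ∙ u ⊔ K ∙ w) = ⊥) :
    Φ u w ≠ 0 := by
  intro h
  refine hu ((Submodule.eq_bot_iff _).mp hL u ⟨mem_sup_left (mem_span_singleton_self u), ?_⟩)
  rintro _ hn
  obtain ⟨_, hy, _, hz, rfl⟩ := mem_sup.mp hn
  obtain ⟨a, rfl⟩ := mem_span_singleton.mp hy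
  obtain ⟨b, rfl⟩ := mem_span_singleton.mp hz
  simp [hΦ.self_eq_zero, hΦ.eq_iff.mp h]

theorem IsAlt.finrank_sup_eq_two (hΦ : Φ.IsAlt) {u w : V} (h : Φ u w ≠ 0) :
    finrank K ↥(K ∙ u ⊔ K ∙ w) = 2 := by
  have hdisj : K ∙ u ⊓ K ∙ w = ⊥ := (Submodule.eq_bot_iff _).mpr fun x ⟨hxu, hxw⟩ ↦ by
    obtain ⟨a, rfl⟩ := mem_span_singleton.mp hxu
    obtain ⟨b, hb⟩ := mem_span_singleton.mp hxw
    refine hΦ.eq_zero_of_mem_sup_of_apply_eq_zero h (mem_sup_left hxu) ?_ ?_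
    · simp [hΦ.self_eq_zero]
    · simp [← hb, hΦ.self_eq_zero]
  have hu : u ≠ 0 := by rintro rfl; simp at h
  have hw : w ≠ 0 := by rintro rfl; simp at h
  have := finrank_sup_add_finrank_inf_eq (K ∙ u) (K ∙ w)
  rw [hdisj, finrank_bot, finrank_span_singleton hu, finrank_span_singleton hw] at this
  omega

theorem IsAlt.sup_sup_eq_of_apply_eq_zero (hΦ : Φ.IsAlt) {π : Submodule K V}
    (hπ : finrank K π = 3) {u w x : V} (hu : u ∈ π) (hw : w ∈ π) (hx : x ∈ π)
    (h : Φ u w ≠ 0) (hx0 : x ≠ 0) (hux : Φ u x = 0) (hwx : Φ w x = 0) :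
    K ∙ u ⊔ K ∙ w ⊔ K ∙ x = π := by
  have : FiniteDimensional K π := .of_finrank_eq_succ hπ
  have hdisj : (K ∙ u ⊔ K ∙ w) ⊓ K ∙ x = ⊥ := (Submodule.eq_bot_iff _).mpr fun y ⟨hyL, hyx⟩ ↦ by
    obtain ⟨c, rfl⟩ := mem_span_singleton.mp hyx
    exact hΦ.eq_zero_of_mem_sup_of_apply_eq_zero h hyL (by simp [hux]) (by simp [hwx])
  have := finrank_sup_add_finrank_inf_eq (K ∙ u ⊔ K ∙ w) (K ∙ x)
  rw [hdisj, finrank_bot, hΦ.finrank_sup_eq_two h, finrank_span_singleton hx0] at this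
  refine eq_of_le_of_finrank_le ?_ (by omega)
  simp only [sup_le_iff, span_singleton_le_iff_mem]
  exact ⟨⟨hu, hw⟩, hx⟩

theorem IsAlt.inf_orthogonal_eq_span_singleton (hΦ : Φ.IsAlt) {π : Submodule K V}
    (hπ : finrank K π = 3) {u w x : V} (hu : u ∈ π) (hw : w ∈ π) (hx : x ∈ π)
    (h : Φ u w ≠ 0) (hx0 : x ≠ 0) (hux : Φ u x = 0) (hwx : Φ w x = 0) :
    π ⊓ Φ.orthogonal π = K ∙ x := by
  have : FiniteDimensional K π := .of_finrank_eq_succ hπ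
  have hxπ : π ≤ LinearMap.ker (Φ.flip x) := by
    rw [← hΦ.sup_sup_eq_of_apply_eq_zero hπ hu hw hx h hx0 hux hwx]
    simp only [sup_le_iff, span_singleton_le_iff_mem, LinearMap.mem_ker, flip_apply]
    exact ⟨⟨hux, hwx⟩, hΦ.self_eq_zero x⟩
  have hdisj : (K ∙ u ⊔ K ∙ w) ⊓ (π ⊓ Φ.orthogonal π) = ⊥ :=
    ((hΦ.disjoint_sup_orthogonal hu hw h).mono_right inf_le_right).eq_bot
  have hsup : finrank K ↥((K ∙ u ⊔ K ∙ w) ⊔ (π ⊓ Φ.orthogonal π)) ≤ 3 :=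
    hπ ▸ finrank_mono (sup_le (by simp [span_singleton_le_iff_mem, hu, hw]) inf_le_left)
  have := finrank_sup_add_finrank_inf_eq (K ∙ u ⊔ K ∙ w) (π ⊓ Φ.orthogonal π)
  rw [hdisj, finrank_bot, hΦ.finrank_sup_eq_two h] at this
  refine (eq_of_le_of_finrank_le ?_ ?_).symm
  · exact (span_singleton_le_iff_mem _ _).mpr ⟨hx, fun n hn ↦ hxπ hn⟩
  · rw [finrank_span_singleton hx0]; omega

theorem IsAlt.finrank_inf_orthogonal_eq_one (hΦ : Φ.IsAlt) {π : Submodule K V}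
    (hπ : finrank K π = 3) {u w : V} (hu : u ∈ π) (hw : w ∈ π) (h : Φ u w ≠ 0) :
    finrank K ↥(π ⊓ Φ.orthogonal π) = 1 := by
  obtain ⟨x, hx, hx0, hux, hwx⟩ :=
    exists_mem_ne_zero_apply_eq_zero_of_two_lt_finrank (N := π) (by omega) (Φ u) (Φ w)
  rw [hΦ.inf_orthogonal_eq_span_singleton hπ hu hw hx h hx0 hux hwx, finrank_span_singleton hx0]

theorem exists_apply_ne_zero_of_finrank_inf_orthogonal_ne {π : Submodule K V}
    (h : finrank K ↥(π ⊓ Φ.orthogonal π) ≠ finrank K π) : ∃ u ∈ π, ∃ w ∈ π, Φ u w ≠ 0 := by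
  by_contra! h0
  exact h (by rw [inf_eq_left.mpr fun w hw u hu ↦ h0 u hu w hw])

end LinearMap.BilinForm

theorem plane_contains_regular_triangle_iff_tangential_general
    {K V : Type*} [Field K] [AddCommGroup V] [Module K V]
    (Φ : LinearMap.BilinForm K V) (halt : Φ.IsAlt)
    (π : Submodule K V) (hπ : Module.finrank K π = 3) :
    (∃ a₁ a₂ a₃ : Submodule K V,
      Module.finrank K a₁ = 1 ∧ Module.finrank K a₂ = 1 ∧ Module.finrank K a₃ = 1 ∧
      a₁ ⊔ a₂ ⊔ a₃ = π ∧
      (a₁ ⊔ a₂) ⊓ Φ.orthogonal (a₁ ⊔ a₂) = ⊥ ∧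
      (a₂ ⊔ a₃) ⊓ Φ.orthogonal (a₂ ⊔ a₃) = ⊥ ∧
      (a₁ ⊔ a₃) ⊓ Φ.orthogonal (a₁ ⊔ a₃) = ⊥) ↔
    Module.finrank K ↥(π ⊓ Φ.orthogonal π) = 1 := by
  constructor
  · rintro ⟨a₁, a₂, _, h₁, h₂, -, hπ', h₁₂, -, -⟩
    obtain ⟨u, hu0, rfl⟩ := exists_ne_zero_eq_span_singleton_of_finrank_eq_one h₁
    obtain ⟨w, -, rfl⟩ := exists_ne_zero_eq_span_singleton_of_finrank_eq_one h₂
    exact halt.finrank_inf_orthogonal_eq_one hπ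
      (hπ' ▸ mem_sup_left (mem_sup_left (mem_span_singleton_self u)))
      (hπ' ▸ mem_sup_left (mem_sup_right (mem_span_singleton_self w)))
      (halt.apply_ne_zero_of_sup_inf_orthogonal_eq_bot hu0 h₁₂)
  · intro hR
    obtain ⟨u, hu, w, hw, h⟩ :=
      Φ.exists_apply_ne_zero_of_finrank_inf_orthogonal_ne (π := π) (by omega)
    obtain ⟨x, hx0, hRx⟩ := exists_ne_zero_eq_span_singleton_of_finrank_eq_one hR
    have hxR : x ∈ π ⊓ Φ.orthogonal π := hRx ▸ mem_span_singleton_self x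
    have hu0 : u ≠ 0 := by rintro rfl; simp at h
    have hw0 : w ≠ 0 := by rintro rfl; simp at h
    have hu₃ : Φ u (u + w + x) ≠ 0 := by simpa [halt.self_eq_zero, hxR.2 u hu] using h
    have hw₃ : Φ w (u + w + x) ≠ 0 := by
      simpa [halt.self_eq_zero, hxR.2 w hw] using mt halt.eq_iff.mpr h
    refine ⟨K ∙ u, K ∙ w, K ∙ (u + w + x), finrank_span_singleton hu0,
      finrank_span_singleton hw0, finrank_span_singleton fun h0 ↦ hu₃ (by rw [h0, map_zero]),
      ?_, halt.sup_inf_orthogonal_eq_bot h, halt.sup_inf_orthogonal_eq_bot hw₃,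
      halt.sup_inf_orthogonal_eq_bot hu₃⟩
    rw [sup_span_singleton_add_eq (add_mem_sup (mem_span_singleton_self u)
      (mem_span_singleton_self w))]
    exact halt.sup_sup_eq_of_apply_eq_zero hπ hu hw hxR.1 h hx0 (hxR.2 u hu) (hxR.2 w hw)

theorem plane_contains_regular_triangle_iff_tangential
    {K V : Type*} [Field K] [AddCommGroup V] [Module K V] [FiniteDimensional K V]
    (Φ : LinearMap.BilinForm K V) (hnd : Φ.Nondegenerate) (halt : Φ.IsAlt)
    (hchar : (2 : K) ≠ 0)
    (π : Submodule K V) (hπ : Module.finrank K π = 3) :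
    (∃ a₁ a₂ a₃ : Submodule K V,
      Module.finrank K a₁ = 1 ∧ Module.finrank K a₂ = 1 ∧ Module.finrank K a₃ = 1 ∧
      a₁ ⊔ a₂ ⊔ a₃ = π ∧
      (a₁ ⊔ a₂) ⊓ Φ.orthogonal (a₁ ⊔ a₂) = ⊥ ∧
      (a₂ ⊔ a₃) ⊓ Φ.orthogonal (a₂ ⊔ a₃) = ⊥ ∧
      (a₁ ⊔ a₃) ⊓ Φ.orthogonal (a₁ ⊔ a₃) = ⊥) ↔
    Module.finrank K ↥(π ⊓ Φ.orthogonal π) = 1 :=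
  plane_contains_regular_triangle_iff_tangential_general Φ halt π hπ
end

section
/- Let V be a finite-dimensional symplectic vector space and let π₁, π₂ be tangential 3-dimensional subspaces (dim Rad(πᵢ) = 1) sharing a common regular 2-dimensional subspace L. Then Rad(π₁) ⊄ L and Rad(π₂) ⊄ L, and there exist 1-dimensional subspaces a₁ ⊆ π₁ \ (L ∪ Rad(π₁)) and a₂ ⊆ π₂ \ (L ∪ Rad(π₂)) such that a₁ + a₂ is a regular line. -/
/-!
Take nonzero radical vectors `rᵢ ∈ Rad πᵢ` and nonzero `l, w ∈ L`. Since `L` is regular it meets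
neither radical, so `u₁ = r₁ + l` and `u₂ = r₂ + w` span lines of `πᵢ` off `L` and off `Rad πᵢ`.
As `rᵢ` is orthogonal to `πᵢ ⊇ L`, `Φ u₁ u₂ = Φ r₁ r₂ + Φ l w`, and `w` can be chosen to make this
nonzero; an alternating form with `Φ u₁ u₂ ≠ 0` is regular on `⟨u₁, u₂⟩`.
-/

open Module Submodule
open LinearMap (BilinForm)

theorem Submodule.ne_bot_of_finrank_ne_zero {R M : Type*} [Semiring R] [Nontrivial R]
    [AddCommMonoid M] [Module R M] {p : Submodule R M} (h : finrank R p ≠ 0) : p ≠ ⊥ := by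
  rintro rfl
  exact h (finrank_bot R M)

namespace LinearMap.BilinForm

section CommSemiring

variable {R M : Type*} [CommSemiring R] [AddCommMonoid M] [Module R M] {B : BilinForm R M}

theorem disjoint_inf_orthogonal_of_le {L π : Submodule R M} (hLπ : L ≤ π)
    (hL : L ⊓ B.orthogonal L = ⊥) : Disjoint L (π ⊓ B.orthogonal π) := by
  rw [disjoint_iff, eq_bot_iff, ← hL]
  exact inf_le_inf_left L (inf_le_right.trans (B.orthogonal_le hLπ))

theorem exists_apply_ne_zero_of_inf_orthogonal_eq_bot {L : Submodule R M}
    (hL : L ⊓ B.orthogonal L = ⊥) {x : M} (hx : x ∈ L) (hx0 : x ≠ 0) :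
    ∃ y ∈ L, B y x ≠ 0 := by
  by_contra! h
  have hx_rad : x ∈ L ⊓ B.orthogonal L := ⟨hx, h⟩
  exact hx0 (by rwa [hL, mem_bot] at hx_rad)

/-- `B l l = 0` while `B l m ≠ 0` for suitable `l, m ∈ L`, so `w = l` or `w = m` works for any `c`,
in every characteristic. -/
theorem IsAlt.exists_add_apply_ne_zero (hB : B.IsAlt) {L : Submodule R M} (hL0 : L ≠ ⊥)
    (hL : L ⊓ B.orthogonal L = ⊥) (c : R) :
    ∃ l ∈ L, l ≠ 0 ∧ ∃ w ∈ L, w ≠ 0 ∧ c + B l w ≠ 0 := by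
  obtain ⟨m, hm, hm0⟩ := exists_mem_ne_zero_of_ne_bot hL0
  obtain ⟨l, hl, hlm⟩ := exists_apply_ne_zero_of_inf_orthogonal_eq_bot hL hm hm0
  have hl0 : l ≠ 0 := by
    rintro rfl
    exact hlm (by simp)
  by_cases hc : c = 0
  · exact ⟨l, hl, hl0, m, hm, hm0, by simpa [hc] using hlm⟩
  · exact ⟨l, hl, hl0, l, hl, hl0, by simpa [hB.self_eq_zero l] using hc⟩

theorem apply_add_add_of_mem_orthogonal (hB : B.IsRefl) {π₁ π₂ : Submodule R M}
    {r₁ r₂ l w : M} (hr₁ : r₁ ∈ B.orthogonal π₁) (hw : w ∈ π₁) (hr₂ : r₂ ∈ B.orthogonal π₂)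
    (hl : l ∈ π₂) : B (r₁ + l) (r₂ + w) = B r₁ r₂ + B l w := by
  have h₁ : B r₁ w = 0 := hB _ _ (hr₁ w hw)
  have h₂ : B l r₂ = 0 := hr₂ l hl
  simp only [map_add, LinearMap.add_apply, h₁, h₂, add_zero, zero_add]

end CommSemiring

theorem IsAlt.sup_span_inf_orthogonal_eq_bot {R M : Type*} [CommRing R] [NoZeroDivisors R]
    [AddCommGroup M] [Module R M] {B : BilinForm R M} (hB : B.IsAlt) {u v : M}
    (huv : B u v ≠ 0) : (R ∙ u ⊔ R ∙ v) ⊓ B.orthogonal (R ∙ u ⊔ R ∙ v) = ⊥ := by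
  rw [eq_bot_iff]
  rintro x ⟨hx, hx_orth⟩
  obtain ⟨y, hy, z, hz, rfl⟩ := mem_sup.mp hx
  obtain ⟨α, rfl⟩ := mem_span_singleton.mp hy
  obtain ⟨β, rfl⟩ := mem_span_singleton.mp hz
  have hu := hx_orth u (mem_sup_left (mem_span_singleton_self u))
  have hv := hx_orth v (mem_sup_right (mem_span_singleton_self v))
  simp only [map_add, map_smul, smul_eq_mul, hB.self_eq_zero, mul_zero, zero_add,
    add_zero, ← hB.neg_eq u v, mul_neg, neg_eq_zero, mul_eq_zero, huv, or_false] at hu hv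
  simp [hu, hv]

end LinearMap.BilinForm

theorem span_singleton_add_of_disjoint {K V : Type*} [Field K] [AddCommGroup V] [Module K V]
    {L R π : Submodule K V} (hLR : Disjoint L R) (hLπ : L ≤ π) (hRπ : R ≤ π) {l r : V}
    (hl : l ∈ L) (hl0 : l ≠ 0) (hr : r ∈ R) (hr0 : r ≠ 0) :
    finrank K (K ∙ (r + l)) = 1 ∧ K ∙ (r + l) ≤ π ∧ ¬ K ∙ (r + l) ≤ L ∧ K ∙ (r + l) ≠ R := by
  have hrL : r + l ∉ L := by
    rw [L.add_mem_iff_left hl]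
    exact fun hrL => hr0 (disjoint_def.mp hLR r hrL hr)
  have hrR : r + l ∉ R := by
    rw [R.add_mem_iff_right hr]
    exact fun hlR => hl0 (disjoint_def.mp hLR l hl hlR)
  refine ⟨finrank_span_singleton fun h => hrL (h ▸ L.zero_mem),
    span_singleton_le_iff_mem _ _ |>.mpr (π.add_mem (hRπ hr) (hLπ hl)),
    fun h => hrL (span_singleton_le_iff_mem _ _ |>.mp h), ?_⟩
  rintro hR
  exact hrR (hR ▸ mem_span_singleton_self _)

theorem planes_sharing_regular_line_general
    {K V : Type*} [Field K] [AddCommGroup V] [Module K V]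
    (Φ : LinearMap.BilinForm K V) (halt : Φ.IsAlt)
    (π₁ π₂ L : Submodule K V)
    (hrad₁ : Module.finrank K ↥(π₁ ⊓ Φ.orthogonal π₁) = 1)
    (hrad₂ : Module.finrank K ↥(π₂ ⊓ Φ.orthogonal π₂) = 1)
    (hL : Module.finrank K L = 2) (hLreg : L ⊓ Φ.orthogonal L = ⊥)
    (hLπ₁ : L ≤ π₁) (hLπ₂ : L ≤ π₂) :
    ¬ π₁ ⊓ Φ.orthogonal π₁ ≤ L ∧ ¬ π₂ ⊓ Φ.orthogonal π₂ ≤ L ∧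
    ∃ a₁ a₂ : Submodule K V,
      Module.finrank K a₁ = 1 ∧ Module.finrank K a₂ = 1 ∧
      a₁ ≤ π₁ ∧ ¬ a₁ ≤ L ∧ a₁ ≠ π₁ ⊓ Φ.orthogonal π₁ ∧
      a₂ ≤ π₂ ∧ ¬ a₂ ≤ L ∧ a₂ ≠ π₂ ⊓ Φ.orthogonal π₂ ∧
      (a₁ ⊔ a₂) ⊓ Φ.orthogonal (a₁ ⊔ a₂) = ⊥ := by
  have hR₁ := ne_bot_of_finrank_ne_zero (hrad₁ ▸ one_ne_zero)
  have hR₂ := ne_bot_of_finrank_ne_zero (hrad₂ ▸ one_ne_zero)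
  obtain ⟨r₁, hr₁, hr₁0⟩ := exists_mem_ne_zero_of_ne_bot hR₁
  obtain ⟨r₂, hr₂, hr₂0⟩ := exists_mem_ne_zero_of_ne_bot hR₂
  have hdisj₁ := Φ.disjoint_inf_orthogonal_of_le hLπ₁ hLreg
  have hdisj₂ := Φ.disjoint_inf_orthogonal_of_le hLπ₂ hLreg
  obtain ⟨l, hl, hl0, w, hw, hw0, hlw⟩ :=
    halt.exists_add_apply_ne_zero (ne_bot_of_finrank_ne_zero (hL ▸ two_ne_zero)) hLreg (Φ r₁ r₂)
  have hΦ : Φ (r₁ + l) (r₂ + w) ≠ 0 := by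
    rwa [Φ.apply_add_add_of_mem_orthogonal halt.isRefl hr₁.2 (hLπ₁ hw) hr₂.2 (hLπ₂ hl)]
  obtain ⟨hdim₁, hle₁, hL₁, hne₁⟩ :=
    span_singleton_add_of_disjoint hdisj₁ hLπ₁ inf_le_left hl hl0 hr₁ hr₁0
  obtain ⟨hdim₂, hle₂, hL₂, hne₂⟩ :=
    span_singleton_add_of_disjoint hdisj₂ hLπ₂ inf_le_left hw hw0 hr₂ hr₂0
  exact ⟨fun h => hR₁ (disjoint_self.mp (hdisj₁.mono_left h)),
    fun h => hR₂ (disjoint_self.mp (hdisj₂.mono_left h)),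
    K ∙ (r₁ + l), K ∙ (r₂ + w), hdim₁, hdim₂, hle₁, hL₁, hne₁, hle₂, hL₂, hne₂,
    halt.sup_span_inf_orthogonal_eq_bot hΦ⟩

theorem planes_sharing_regular_line
    {K V : Type*} [Field K] [AddCommGroup V] [Module K V] [FiniteDimensional K V]
    (Φ : LinearMap.BilinForm K V) (hnd : Φ.Nondegenerate) (halt : Φ.IsAlt)
    (hchar : (2 : K) ≠ 0)
    (π₁ π₂ L : Submodule K V)
    (hπ₁ : Module.finrank K π₁ = 3) (hπ₂ : Module.finrank K π₂ = 3)
    (hrad₁ : Module.finrank K ↥(π₁ ⊓ Φ.orthogonal π₁) = 1)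
    (hrad₂ : Module.finrank K ↥(π₂ ⊓ Φ.orthogonal π₂) = 1)
    (hL : Module.finrank K L = 2) (hLreg : L ⊓ Φ.orthogonal L = ⊥)
    (hLπ₁ : L ≤ π₁) (hLπ₂ : L ≤ π₂) :
    ¬ π₁ ⊓ Φ.orthogonal π₁ ≤ L ∧ ¬ π₂ ⊓ Φ.orthogonal π₂ ≤ L ∧
    ∃ a₁ a₂ : Submodule K V,
      Module.finrank K a₁ = 1 ∧ Module.finrank K a₂ = 1 ∧
      a₁ ≤ π₁ ∧ ¬ a₁ ≤ L ∧ a₁ ≠ π₁ ⊓ Φ.orthogonal π₁ ∧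
      a₂ ≤ π₂ ∧ ¬ a₂ ≤ L ∧ a₂ ≠ π₂ ⊓ Φ.orthogonal π₂ ∧
      (a₁ ⊔ a₂) ⊓ Φ.orthogonal (a₁ ⊔ a₂) = ⊥ :=
  planes_sharing_regular_line_general Φ halt π₁ π₂ L hrad₁ hrad₂ hL hLreg hLπ₁ hLπ₂
end
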